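/- arXiv:2308.01242 — 2 statements merged into one kernel-verified Lean document; each statement's English description precedes it below -/
import Mathlib

section
/- For every t ≥ 2, f_o(t) ≤ f_eo(t) ≤ 2f(t), where f(t) is the smallest integer such that every K_t-minor-free graph is f(t)-colorable, f_o(t) the smallest integer such that every odd-K_t-minor-free graph is f_o(t)-colorable, and f_eo(t) the smallest integer such that every even-odd-K_t-minor-free graph is f_eo(t)-colorable. -/
/-- A signed (multi)graph: an edge set with endpoints (an unordered pair,
possibly a loop) and a sign for each edge (`neg e = true` means `e` is negative). -/
structure SGraph (V : Type) where
  E : Type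
  ends : E → Sym2 V
  neg : E → Bool

namespace SGraph

variable {V W : Type}

/-- Walks in a signed multigraph, recorded as sequences of edges. -/
inductive Walk (G : SGraph V) : V → V → Type where
  | nil {v : V} : Walk G v v
  | cons {u v w : V} (e : G.E) (h : G.ends e = s(u, v)) (p : Walk G v w) : Walk G u w

namespace Walk

variable {G : SGraph V}

/-- The list of edges of a walk. -/
def edges : {u v : V} → G.Walk u v → List G.E
  | _, _, .nil => []
  | _, _, .cons e _ p => e :: p.edges

/-- The list of vertices visited by a walk (in order, with repetitions). -/
def support : {u v : V} → G.Walk u v → List V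
  | u, _, .nil => [u]
  | u, _, .cons _ _ p => u :: p.support

/-- A walk is negative if it uses an odd number of negative edges
(its sign, the product of the signs of its edges with multiplicity, is `-1`). -/
def isNeg {u v : V} (p : G.Walk u v) : Bool :=
  (p.edges.map G.neg).foldr Bool.xor false

/-- A closed walk is a cycle if it has at least one edge, no repeated edge,
and no repeated vertex (except the initial vertex which is also final). -/
def IsCycle {v : V} (p : G.Walk v v) : Prop :=
  p.edges ≠ [] ∧ p.edges.Nodup ∧ p.support.tail.Nodup

/-- The internal vertices of a walk. -/
def inner {u v : V} (p : G.Walk u v) : List V :=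
  p.support.tail.dropLast

end Walk

/-- A set of vertices is balanced if it induces no negative cycle. -/
def BalancedSet (G : SGraph V) (X : Set V) : Prop :=
  ∀ (v : V) (p : G.Walk v v), p.IsCycle → (∀ u ∈ p.support, u ∈ X) → p.isNeg = false

/-- A signed graph is balanced if it contains no negative cycle. -/
def IsBalanced (G : SGraph V) : Prop := G.BalancedSet Set.univ

/-- The signed graph has a negative loop. -/
def HasNegLoop (G : SGraph V) : Prop :=
  ∃ e : G.E, (∃ v : V, G.ends e = s(v, v)) ∧ G.neg e = true

/-- The signed graph has a positive loop. -/
def HasPosLoop (G : SGraph V) : Prop :=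
  ∃ e : G.E, (∃ v : V, G.ends e = s(v, v)) ∧ G.neg e = false

/-- A balanced `k`-coloring: a partition of the vertices into `k` balanced color classes. -/
def ColorableB (G : SGraph V) (k : ℕ) : Prop :=
  ∃ c : V → Fin k, ∀ i : Fin k, G.BalancedSet {v | c v = i}

/-- The balanced chromatic number. -/
noncomputable def chromNumB (G : SGraph V) : ℕ∞ :=
  ⨅ n ∈ {n : ℕ | G.ColorableB n}, (n : ℕ∞)

/-- Switching at the set of vertices where `s` is `true`: the sign of an edge is
multiplied by `-1` once for each of its endpoints (with multiplicity) in the set;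
thus an edge with exactly one endpoint in the set changes sign, and loops are unchanged. -/
def switch (G : SGraph V) (s : V → Bool) : SGraph V where
  E := G.E
  ends := G.ends
  neg e := Bool.xor (G.neg e)
    (Sym2.lift ⟨fun u v => Bool.xor (s u) (s v), fun u v => Bool.xor_comm _ _⟩ (G.ends e))

/-- The negation of a signature. -/
def negate (G : SGraph V) : SGraph V where
  E := G.E
  ends := G.ends
  neg e := !(G.neg e)

/-- A set of vertices is connected via positive edges inside itself. -/
def PosConnected (G : SGraph V) (B : Set V) : Prop :=
  B.Nonempty ∧ ∀ u ∈ B, ∀ v ∈ B, ∃ p : G.Walk u v,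
    (∀ x ∈ p.support, x ∈ B) ∧ ∀ e ∈ p.edges, G.neg e = false

/-- `H` is a minor of `G`: after a suitable switching of `G`, there are disjoint
branch sets (each connected via positive edges) for the vertices of `H`, and
distinct edges of `G`, with the correct signs, realizing the edges of `H`. -/
def IsMinor (H : SGraph W) (G : SGraph V) : Prop :=
  ∃ s : V → Bool, ∃ B : W → Set V,
    (∀ x : W, (G.switch s).PosConnected (B x)) ∧
    (Pairwise fun x y => Disjoint (B x) (B y)) ∧
    ∃ η : H.E → G.E, Function.Injective η ∧
      ∀ (e : H.E) (x y : W), H.ends e = s(x, y) →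
        (G.switch s).neg (η e) = H.neg e ∧
        ∃ u v : V, G.ends (η e) = s(u, v) ∧ u ∈ B x ∧ v ∈ B y

/-- A homomorphism of signed graphs: after a suitable switching of the source,
a map of vertices and edges preserving incidences and signs. -/
def HomTo (G : SGraph V) (H : SGraph W) : Prop :=
  ∃ s : V → Bool, ∃ f : V → W, ∃ g : G.E → H.E,
    ∀ (e : G.E) (u v : V), G.ends e = s(u, v) →
      H.ends (g e) = s(f u, f v) ∧ H.neg (g e) = (G.switch s).neg e

/-- A subdivision of `H` is isomorphic to a subgraph of `G` (signs ignored):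
an injection of the vertices of `H` together with internally disjoint,
edge-disjoint paths of `G` realizing the edges of `H`. -/
def IsSubdivisionOf (H : SGraph W) (G : SGraph V) : Prop :=
  ∃ (φ : W → V) (ep : H.E → W × W),
    Function.Injective φ ∧
    (∀ e : H.E, H.ends e = s((ep e).1, (ep e).2)) ∧
    ∃ P : (e : H.E) → G.Walk (φ (ep e).1) (φ (ep e).2),
      (∀ e, (P e).support.Nodup) ∧
      (∀ e f, e ≠ f → ∀ x ∈ (P e).inner, x ∉ (P f).support) ∧
      (∀ e, ∀ x ∈ (P e).inner, x ∉ Set.range φ) ∧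
      (∀ e f, e ≠ f → ∀ g ∈ (P e).edges, g ∉ (P f).edges)

/-- `H` is a total topological minor of `G`: a subdivision of `H` occurs as a
subgraph of `G` in which the path representing each edge `e` of `H` has sign
exactly the sign of `e`. -/
def IsTotalTopMinor (H : SGraph W) (G : SGraph V) : Prop :=
  ∃ (φ : W → V) (ep : H.E → W × W),
    Function.Injective φ ∧
    (∀ e : H.E, H.ends e = s((ep e).1, (ep e).2)) ∧
    ∃ P : (e : H.E) → G.Walk (φ (ep e).1) (φ (ep e).2),
      (∀ e, (P e).support.Nodup) ∧
      (∀ e f, e ≠ f → ∀ x ∈ (P e).inner, x ∉ (P f).support) ∧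
      (∀ e, ∀ x ∈ (P e).inner, x ∉ Set.range φ) ∧
      (∀ e f, e ≠ f → ∀ g ∈ (P e).edges, g ∉ (P f).edges) ∧
      (∀ e, (P e).isNeg = H.neg e)

/-- `H` is a topological minor of `G`: some subdivision of `H` occurs as a subgraph
of `G` in which every cycle of `H` keeps its sign; equivalently, after a suitable
switching of `H`, `H` is a total topological minor of `G`. -/
def IsTopMinor (H : SGraph W) (G : SGraph V) : Prop :=
  ∃ s : W → Bool, (H.switch s).IsTotalTopMinor G

end SGraph

open SGraph

/-- The signed graph `G̃` obtained from a graph `G` by replacing each edge by a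
pair of parallel edges, one positive and one negative. -/
def SimpleGraph.tildeS {V : Type} (G : SimpleGraph V) : SGraph V where
  E := G.edgeSet × Bool
  ends e := (e.1 : Sym2 V)
  neg e := e.2

/-- The all-negative signed graph `(G, -)` on a graph `G`. -/
def SimpleGraph.allNeg {V : Type} (G : SimpleGraph V) : SGraph V where
  E := G.edgeSet
  ends e := (e : Sym2 V)
  neg _ := true

/-- `K̃_k`: the signed graph on `k` vertices with a positive and a negative edge
between each pair of distinct vertices. -/
def tildeK (k : ℕ) : SGraph (Fin k) := (⊤ : SimpleGraph (Fin k)).tildeS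

/-- `(K_k, -)`: the all-negative complete signed graph on `k` vertices. -/
def allNegK (k : ℕ) : SGraph (Fin k) := (⊤ : SimpleGraph (Fin k)).allNeg

/-- `K̃_k⁺`: as `K̃_k`, with in addition a positive loop at every vertex. -/
def tildeKplus (k : ℕ) : SGraph (Fin k) where
  E := ((⊤ : SimpleGraph (Fin k)).edgeSet × Bool) ⊕ Fin k
  ends := Sum.elim (fun e => (e.1 : Sym2 (Fin k))) (fun i => s(i, i))
  neg := Sum.elim (fun e => e.2) (fun _ => false)

/-- `G` has a `K_k`-minor: `k` disjoint connected branch sets, pairwise joined by an edge. -/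
def SimpleGraph.HasCliqueMinor {V : Type} (G : SimpleGraph V) (k : ℕ) : Prop :=
  ∃ T : Fin k → G.Subgraph,
    (∀ i, (T i).coe.Connected) ∧
    (Pairwise fun i j => Disjoint (T i).verts (T j).verts) ∧
    ∀ i j, i ≠ j → ∃ u v, G.Adj u v ∧ u ∈ (T i).verts ∧ v ∈ (T j).verts

/-- `G` has an odd-`K_k`-minor: a 2-coloring of the vertices together with `k`
disjoint trees, all of whose edges are properly colored, pairwise joined by a
monochromatic edge. -/
def SimpleGraph.HasOddCliqueMinor {V : Type} (G : SimpleGraph V) (k : ℕ) : Prop :=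
  ∃ c : V → Bool, ∃ T : Fin k → G.Subgraph,
    (∀ i, (T i).coe.IsTree) ∧
    (Pairwise fun i j => Disjoint (T i).verts (T j).verts) ∧
    (∀ i, ∀ u v, (T i).Adj u v → c u ≠ c v) ∧
    ∀ i j, i ≠ j →
      ∃ u v, G.Adj u v ∧ u ∈ (T i).verts ∧ v ∈ (T j).verts ∧ c u = c v

/-- `G` has an even-odd-`K_k`-minor: as an odd-`K_k`-minor, with in addition a
properly colored edge between each pair of distinct trees. -/
def SimpleGraph.HasEvenOddCliqueMinor {V : Type} (G : SimpleGraph V) (k : ℕ) : Prop :=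
  ∃ c : V → Bool, ∃ T : Fin k → G.Subgraph,
    (∀ i, (T i).coe.IsTree) ∧
    (Pairwise fun i j => Disjoint (T i).verts (T j).verts) ∧
    (∀ i, ∀ u v, (T i).Adj u v → c u ≠ c v) ∧
    ∀ i j, i ≠ j →
      (∃ u v, G.Adj u v ∧ u ∈ (T i).verts ∧ v ∈ (T j).verts ∧ c u = c v) ∧
      (∃ u v, G.Adj u v ∧ u ∈ (T i).verts ∧ v ∈ (T j).verts ∧ c u ≠ c v)

/-- The fractional chromatic number of a finite graph: the infimum total weight of
a system of nonnegative weights on independent sets covering every vertex with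
total weight at least 1. -/
noncomputable def SimpleGraph.fracChrom {V : Type} [Fintype V] [DecidableEq V]
    (G : SimpleGraph V) : ℝ :=
  sInf {r : ℝ | ∃ w : Finset V → ℝ, (∀ A, 0 ≤ w A) ∧
    (∀ A : Finset V, w A ≠ 0 → (∀ u ∈ A, ∀ v ∈ A, ¬G.Adj u v)) ∧
    (∀ v : V, 1 ≤ ∑ A : Finset V, if v ∈ A then w A else 0) ∧
    ∑ A : Finset V, w A ≤ r}

/-- The fractional balanced chromatic number of a finite signed graph: the infimum
total weight of a system of nonnegative weights on balanced sets covering every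
vertex with total weight at least 1. -/
noncomputable def SGraph.fracChromB {V : Type} [Fintype V] [DecidableEq V]
    (G : SGraph V) : ℝ :=
  sInf {r : ℝ | ∃ w : Finset V → ℝ, (∀ A, 0 ≤ w A) ∧
    (∀ A : Finset V, w A ≠ 0 → G.BalancedSet ↑A) ∧
    (∀ v : V, 1 ≤ ∑ A : Finset V, if v ∈ A then w A else 0) ∧
    ∑ A : Finset V, w A ≤ r}

/-- `f_eo(t)`: the smallest `n` such that every even-odd-`K_t`-minor-free graph is
`n`-colorable. -/
noncomputable def feo (t : ℕ) : ℕ :=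
  sInf {n : ℕ | ∀ (m : ℕ) (G : SimpleGraph (Fin m)),
    ¬ G.HasEvenOddCliqueMinor t → G.Colorable n}

/-- `f(t)`: the smallest `n` such that every `K_t`-minor-free graph is `n`-colorable. -/
noncomputable def fHadwiger (t : ℕ) : ℕ :=
  sInf {n : ℕ | ∀ (m : ℕ) (G : SimpleGraph (Fin m)),
    ¬ G.HasCliqueMinor t → G.Colorable n}

/-- `f_o(t)`: the smallest `n` such that every odd-`K_t`-minor-free graph is
`n`-colorable. -/
noncomputable def fo (t : ℕ) : ℕ :=
  sInf {n : ℕ | ∀ (m : ℕ) (G : SimpleGraph (Fin m)),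
    ¬ G.HasOddCliqueMinor t → G.Colorable n}


/-!
Split the vertices greedily into parts, each a maximal set that induces a connected bipartite
graph among the vertices not yet covered, and fix a bipartition `δ` of each part. Colouring a
vertex by the pair (colour of its part in a colouring of the quotient graph, `δ`) is proper, so
it suffices that the quotient is `K_t`-minor-free. A `K_t`-minor of the quotient lifts to an
even-odd one: the parts of a branch set are glued, along one edge per new part, into a connected
subgraph all of whose edges are properly coloured after flipping the sides of some parts, and a
vertex adjacent to an earlier part sees both of its sides, which yields both a monochromatic and
a properly coloured edge between any two branch sets. Finally `f_o ≤ f_eo` since every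
even-odd-`K_t`-minor is an odd-`K_t`-minor.
-/

theorem exists_eqOn_of_pairwise_disjoint {α β κ : Type*} [Nonempty β] {S : κ → Set α}
    (hS : Pairwise fun a b => Disjoint (S a) (S b)) (f : κ → α → β) :
    ∃ g : α → β, ∀ a, Set.EqOn g (f a) (S a) := by
  classical
  refine ⟨fun x => if h : ∃ a, x ∈ S a then f h.choose x else Classical.arbitrary β,
    fun a x hx => ?_⟩
  have h : ∃ a, x ∈ S a := ⟨a, hx⟩
  obtain rfl : h.choose = a := by
    by_contra hne
    exact Set.disjoint_left.mp (hS hne) h.choose_spec hx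
  exact dif_pos h

namespace SimpleGraph

variable {V ι : Type} {G : SimpleGraph V}

theorem HasOddCliqueMinor.hasCliqueMinor {t : ℕ} (h : G.HasOddCliqueMinor t) :
    G.HasCliqueMinor t := by
  obtain ⟨_, T, htree, hdisj, -, hadj⟩ := h
  refine ⟨T, fun i => (htree i).connected, hdisj, fun i j hij => ?_⟩
  obtain ⟨u, v, huv, hu, hv, -⟩ := hadj i j hij
  exact ⟨u, v, huv, hu, hv⟩

theorem HasEvenOddCliqueMinor.hasOddCliqueMinor {t : ℕ} (h : G.HasEvenOddCliqueMinor t) :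
    G.HasOddCliqueMinor t := by
  obtain ⟨c, T, htree, hdisj, hc, hadj⟩ := h
  exact ⟨c, T, htree, hdisj, hc, fun i j hij => (hadj i j hij).1⟩

theorem Subgraph.Connected.exists_isTree_le {H : G.Subgraph} (hH : H.Connected) :
    ∃ T ≤ H, T.verts = H.verts ∧ T.coe.IsTree := by
  obtain ⟨T, hle, hT⟩ := hH.coe.exists_isTree_le
  let T' : G.Subgraph :=
    { verts := H.verts
      Adj u v := ∃ (hu : u ∈ H.verts) (hv : v ∈ H.verts), T.Adj ⟨u, hu⟩ ⟨v, hv⟩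
      adj_sub := fun ⟨_, _, h⟩ => H.adj_sub (hle h)
      edge_vert := fun ⟨hu, _, _⟩ => hu
      symm := ⟨fun _ _ ⟨hu, hv, h⟩ => ⟨hv, hu, h.symm⟩⟩ }
  have hT' : T'.coe = T := by
    ext ⟨u, hu⟩ ⟨v, hv⟩
    exact ⟨fun ⟨_, _, h⟩ => h, fun h => ⟨hu, hv, h⟩⟩
  exact ⟨T', ⟨le_rfl, fun _ _ ⟨_, _, h⟩ => hle h⟩, rfl, hT' ▸ hT⟩

structure IsBipartitePartition (G : SimpleGraph V) (π : V → ι) (δ : V → Bool) : Prop where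
  connected (i : ι) : ((⊤ : G.Subgraph).induce (π ⁻¹' {i})).Connected
  side_ne ⦃u v : V⦄ : G.Adj u v → π u = π v → δ u ≠ δ v

def HasBipartiteLift (G : SimpleGraph V) (π : V → ι) (δ : V → Bool) (A : Set ι) : Prop :=
  ∃ (H : G.Subgraph) (ε : ι → Bool), H.verts = π ⁻¹' A ∧ H.Connected ∧
    ∀ ⦃u v⦄, H.Adj u v → xor (δ u) (ε (π u)) ≠ xor (δ v) (ε (π v))

namespace IsBipartitePartition

variable {π : V → ι} {δ : V → Bool}

theorem hasBipartiteLift_singleton (hP : G.IsBipartitePartition π δ) (i : ι) :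
    G.HasBipartiteLift π δ {i} := by
  refine ⟨_, fun _ => false, rfl, hP.connected i, fun u v huv => ?_⟩
  obtain ⟨hu, hv, huv⟩ := huv
  simpa using hP.side_ne huv (hu.trans hv.symm)

theorem hasBipartiteLift_insert (hP : G.IsBipartitePartition π δ) {A : Set ι} {i j : ι}
    (hA : G.HasBipartiteLift π δ A) (hi : i ∈ A) (hj : j ∉ A) (hij : (G.map π).Adj i j) :
    G.HasBipartiteLift π δ (insert j A) := by
  classical
  obtain ⟨H, ε, hHv, hHc, hHε⟩ := hA
  obtain ⟨-, u₀, v₀, huv₀, rfl, rfl⟩ := hij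
  have hu₀ : u₀ ∈ H.verts := hHv ▸ hi
  -- the new part is flipped so that the connecting edge `u₀v₀` is properly coloured
  set ε' := Function.update ε (π v₀) (xor (δ v₀) !(xor (δ u₀) (ε (π u₀))))
  have hε' : ∀ w, π w ∈ A → ε' (π w) = ε (π w) := by
    intro w hw
    exact Function.update_of_ne (ne_of_mem_of_not_mem hw hj) _ _
  refine ⟨(⊤ : G.Subgraph).induce {u₀, v₀} ⊔ H ⊔ (⊤ : G.Subgraph).induce (π ⁻¹' {π v₀}), ε',
    ?_, Subgraph.connected_induce_top_sup hHc.preconnected (hP.connected _).preconnected hu₀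
      rfl huv₀, ?_⟩
  · ext w
    simp only [Subgraph.verts_sup, Subgraph.induce_verts, hHv]
    grind
  · rintro u v ((huv | huv) | huv)
    · rw [← Subgraph.subgraphOfAdj_eq_induce huv₀, subgraphOfAdj_adj, Sym2.eq_iff] at huv
      have h₀ : xor (δ u₀) (ε' (π u₀)) ≠ xor (δ v₀) (ε' (π v₀)) := by
        rw [hε' u₀ hi]
        simp [ε']
      rcases huv with ⟨rfl, rfl⟩ | ⟨rfl, rfl⟩
      · exact h₀
      · exact h₀.symm
    · have hu := H.edge_vert huv
      have hv := H.edge_vert huv.symm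
      rw [hHv] at hu hv
      rw [hε' u hu, hε' v hv]
      exact hHε huv
    · obtain ⟨hu, hv, huv⟩ := huv
      rw [Set.mem_preimage, Set.mem_singleton_iff] at hu hv
      rw [hu, hv, (Bool.xor_left_inj).ne]
      exact hP.side_ne huv (hu.trans hv.symm)

theorem hasBipartiteLift [Finite ι] (hP : G.IsBipartitePartition π δ)
    {W : (G.map π).Subgraph} (hW : W.Connected) : G.HasBipartiteLift π δ W.verts := by
  obtain ⟨i₀, hi₀⟩ := hW.nonempty
  obtain ⟨A, hi₀A, hA⟩ := Finite.exists_le_maximal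
    (p := fun A => A ⊆ W.verts ∧ G.HasBipartiteLift π δ A)
    ⟨Set.singleton_subset_iff.mpr hi₀, hP.hasBipartiteLift_singleton i₀⟩
  suffices W.verts ⊆ A from (hA.prop.1.antisymm this) ▸ hA.prop.2
  intro j hj
  by_contra hjA
  obtain ⟨p⟩ := hW.preconnected ⟨i₀, hi₀⟩ ⟨j, hj⟩
  obtain ⟨d, -, hd₁, hd₂⟩ := p.exists_boundary_dart {x | x.1 ∈ A} (hi₀A rfl) hjA
  have hmax := hA.eq_of_subset
    ⟨Set.insert_subset d.snd.2 hA.prop.1,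
      hP.hasBipartiteLift_insert hA.prop.2 hd₁ hd₂ d.adj.adj_sub⟩ (Set.subset_insert _ _)
  exact hd₂ (hmax ▸ Set.mem_insert _ _)

end IsBipartitePartition

theorem colorable_two_mul_of_map {π : V → ι} {δ : V → Bool}
    (hδ : ∀ ⦃u v⦄, G.Adj u v → π u = π v → δ u ≠ δ v) {n : ℕ} (hn : (G.map π).Colorable n) :
    G.Colorable (2 * n) := by
  obtain ⟨c⟩ := hn
  have hc : G.Colorable (Fintype.card (Fin n × Bool)) := by
    refine (Coloring.mk (fun v => (c (π v), δ v)) fun {u v} huv h => ?_).colorable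
    by_cases hπ : π u = π v
    · exact hδ huv hπ (Prod.ext_iff.mp h).2
    · exact c.valid ⟨hπ, u, v, huv, rfl, rfl⟩ (Prod.ext_iff.mp h).1
  simpa [mul_comm] using hc

theorem exists_adj_eq_and_exists_adj_ne {c : V → Bool} {X Y : Set V} {x y y' : V}
    (hx : x ∈ X) (hy : y ∈ Y) (hy' : y' ∈ Y) (hxy : G.Adj x y) (hxy' : G.Adj x y')
    (hc : c y ≠ c y') :
    (∃ u v, G.Adj u v ∧ u ∈ X ∧ v ∈ Y ∧ c u = c v) ∧
      ∃ u v, G.Adj u v ∧ u ∈ X ∧ v ∈ Y ∧ c u ≠ c v := by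
  by_cases h : c x = c y
  · exact ⟨⟨x, y, hxy, hx, hy, h⟩, x, y', hxy', hx, hy', h ▸ hc⟩
  · refine ⟨⟨x, y', hxy', hx, hy', ?_⟩, x, y, hxy, hx, hy, h⟩
    revert h hc
    cases c x <;> cases c y <;> cases c y' <;> decide

structure IsBipartiteLayering [LT ι] (G : SimpleGraph V) (π : V → ι) (δ : V → Bool) : Prop
    extends G.IsBipartitePartition π δ where
  exists_adj_ne ⦃u v : V⦄ : G.Adj v u → π u < π v →
    ∃ w w', π w = π u ∧ π w' = π u ∧ G.Adj v w ∧ G.Adj v w' ∧ δ w ≠ δ w'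

theorem IsBipartiteLayering.hasEvenOddCliqueMinor [LinearOrder ι] [Finite ι]
    {π : V → ι} {δ : V → Bool} (hL : G.IsBipartiteLayering π δ) {t : ℕ}
    (h : (G.map π).HasCliqueMinor t) : G.HasEvenOddCliqueMinor t := by
  classical
  obtain ⟨W, hWc, hWdisj, hWadj⟩ := h
  choose H ε hHv hHc hHε using fun a => hL.hasBipartiteLift ⟨hWc a⟩
  choose T hTH hTv hT using fun a => (hHc a).exists_isTree_le
  have hTv' : ∀ a v, v ∈ (T a).verts ↔ π v ∈ (W a).verts := fun a v => by
    rw [hTv, hHv, Set.mem_preimage]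
  obtain ⟨c, hc⟩ := exists_eqOn_of_pairwise_disjoint
    (hWdisj.mono fun _ _ h => h.preimage π) fun a v => xor (δ v) (ε a (π v))
  have hsides : ∀ a w w', w ∈ (T a).verts → π w' = π w → δ w ≠ δ w' → c w ≠ c w' := by
    intro a w w' hw hπ hδ
    rw [hTv'] at hw
    rw [hc a hw, hc a (show π w' ∈ (W a).verts from hπ ▸ hw)]
    beta_reduce
    rw [hπ, (Bool.xor_left_inj).ne]
    exact hδ
  refine ⟨c, T, hT, fun a b hab => ?_, fun a u v huv => ?_, fun a b hab => ?_⟩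
  · change Disjoint (T a).verts (T b).verts
    rw [hTv, hTv, hHv, hHv]
    exact (hWdisj hab).preimage π
  · have hu := (hTv' a u).mp ((T a).edge_vert huv)
    have hv := (hTv' a v).mp ((T a).edge_vert huv.symm)
    rw [hc a hu, hc a hv]
    exact hHε a ((hTH a).2 huv)
  · obtain ⟨_, _, ⟨hne, u, v, huv, rfl, rfl⟩, hu, hv⟩ := hWadj a b hab
    rcases hne.lt_or_gt with hlt | hlt
    · obtain ⟨w, w', hw, hw', hvw, hvw', hδ⟩ := hL.exists_adj_ne huv.symm hlt
      have hwa : w ∈ (T a).verts := (hTv' a w).mpr (hw ▸ hu)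
      obtain ⟨⟨x, y, hxy, hx, hy, hc₁⟩, x', y', hxy', hx', hy', hc₂⟩ :=
        exists_adj_eq_and_exists_adj_ne ((hTv' b v).mpr hv) hwa ((hTv' a w').mpr (hw' ▸ hu))
          hvw hvw' (hsides a w w' hwa (hw'.trans hw.symm) hδ)
      exact ⟨⟨y, x, hxy.symm, hy, hx, hc₁.symm⟩, y', x', hxy'.symm, hy', hx', Ne.symm hc₂⟩
    · obtain ⟨w, w', hw, hw', huw, huw', hδ⟩ := hL.exists_adj_ne huv hlt
      have hwb : w ∈ (T b).verts := (hTv' b w).mpr (hw ▸ hv)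
      exact exists_adj_eq_and_exists_adj_ne ((hTv' a u).mpr hu) hwb ((hTv' b w').mpr (hw' ▸ hv))
        huw huw' (hsides b w w' hwb (hw'.trans hw.symm) hδ)

def IsBipartiteBlock (G : SimpleGraph V) (P : Set V) : Prop :=
  ((⊤ : G.Subgraph).induce P).Connected ∧
    ∃ d : V → Bool, ∀ ⦃u v⦄, u ∈ P → v ∈ P → G.Adj u v → d u ≠ d v

theorem isBipartiteBlock_singleton (v : V) : G.IsBipartiteBlock {v} :=
  ⟨Subgraph.singletonSubgraph_eq_induce ▸ Subgraph.singletonSubgraph_connected,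
    fun _ => false, by rintro u w rfl rfl h; exact (h.ne rfl).elim⟩

theorem isBipartiteBlock_insert {P : Set V} {d : V → Bool} {u v : V}
    (hP : ((⊤ : G.Subgraph).induce P).Connected)
    (hd : ∀ ⦃x y⦄, x ∈ P → y ∈ P → G.Adj x y → d x ≠ d y) (hu : u ∈ P) (hvP : v ∉ P)
    (hvu : G.Adj v u) (hsame : ∀ w ∈ P, G.Adj v w → d w = d u) :
    G.IsBipartiteBlock (insert v P) := by
  classical
  refine ⟨?_, Function.update d v !(d u), ?_⟩
  · have h := Subgraph.induce_union_connected
      (Subgraph.top_induce_pair_connected_of_adj hvu).preconnected hP.preconnected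
      ⟨u, by simp, hu⟩
    rwa [Set.insert_union, Set.singleton_union, Set.insert_eq_of_mem hu] at h
  · have hne : ∀ w ∈ P, w ≠ v := fun w hw h => hvP (h ▸ hw)
    rintro x y (rfl | hx) (rfl | hy) hxy
    · exact (hxy.ne rfl).elim
    · simp [Function.update_of_ne (hne y hy), hsame y hy hxy]
    · simp [Function.update_of_ne (hne x hx), hsame x hx hxy.symm]
    · simpa [Function.update_of_ne (hne x hx), Function.update_of_ne (hne y hy)] using
        hd hx hy hxy

theorem exists_adj_ne_of_maximal_isBipartiteBlock {R P : Set V} {d : V → Bool} {u v : V}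
    (hP : Maximal (fun P => P ⊆ R ∧ G.IsBipartiteBlock P) P)
    (hd : ∀ ⦃x y⦄, x ∈ P → y ∈ P → G.Adj x y → d x ≠ d y) (hu : u ∈ P) (hv : v ∈ R)
    (hvP : v ∉ P) (hvu : G.Adj v u) :
    ∃ w ∈ P, ∃ w' ∈ P, G.Adj v w ∧ G.Adj v w' ∧ d w ≠ d w' := by
  by_contra! h
  have hblock := isBipartiteBlock_insert hP.prop.2.1 hd hu hvP hvu
    fun w hw hvw => h w hw u hu hvw hvu
  have := hP.eq_of_subset ⟨Set.insert_subset hv hP.prop.1, hblock⟩ (Set.subset_insert v P)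
  exact hvP (this ▸ Set.mem_insert v P)

structure IsBipartiteLayeringOn (G : SimpleGraph V) (R : Set V) (k : ℕ) (π : V → ℕ)
    (δ : V → Bool) : Prop where
  lt ⦃v : V⦄ : v ∈ R → π v < k
  connected ⦃i : ℕ⦄ : i < k → ((⊤ : G.Subgraph).induce {v ∈ R | π v = i}).Connected
  side_ne ⦃u v : V⦄ : u ∈ R → v ∈ R → G.Adj u v → π u = π v → δ u ≠ δ v
  exists_adj_ne ⦃u v : V⦄ : u ∈ R → v ∈ R → G.Adj v u → π u < π v →
    ∃ w ∈ R, ∃ w' ∈ R, π w = π u ∧ π w' = π u ∧ G.Adj v w ∧ G.Adj v w' ∧ δ w ≠ δ w'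

open Classical in
theorem IsBipartiteLayeringOn.cons {R P : Set V} {d : V → Bool} {k : ℕ} {π : V → ℕ}
    {δ : V → Bool} (hP : Maximal (fun P => P ⊆ R ∧ G.IsBipartiteBlock P) P)
    (hd : ∀ ⦃x y⦄, x ∈ P → y ∈ P → G.Adj x y → d x ≠ d y)
    (hL : G.IsBipartiteLayeringOn (R \ P) k π δ) :
    G.IsBipartiteLayeringOn R (k + 1) (fun v => if v ∈ P then 0 else π v + 1)
      (fun v => if v ∈ P then d v else δ v) where
  lt v hv := by
    by_cases hvP : v ∈ P
    · simp [hvP]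
    · simpa [hvP] using hL.lt ⟨hv, hvP⟩
  connected i hi := by
    cases i with
    | zero =>
      convert hP.prop.2.1 using 2
      ext v
      by_cases hvP : v ∈ P
      · simp [hvP, hP.prop.1 hvP]
      · simp [hvP]
    | succ i =>
      convert hL.connected (Nat.lt_of_succ_lt_succ hi) using 2
      ext v
      by_cases hvP : v ∈ P <;> simp [hvP]
  side_ne u v hu hv huv h := by
    by_cases huP : u ∈ P <;> by_cases hvP : v ∈ P <;> simp only [huP, hvP, if_true, if_false] at h ⊢
    · exact hd huP hvP huv
    · omega
    · omega
    · exact hL.side_ne ⟨hu, huP⟩ ⟨hv, hvP⟩ huv (by omega)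
  exists_adj_ne u v hu hv hvu h := by
    by_cases huP : u ∈ P <;> by_cases hvP : v ∈ P <;> simp only [huP, hvP, if_true, if_false] at h ⊢
    · omega
    · obtain ⟨w, hw, w', hw', hvw, hvw', hdw⟩ :=
        exists_adj_ne_of_maximal_isBipartiteBlock hP hd huP hv hvP hvu
      exact ⟨w, hP.prop.1 hw, w', hP.prop.1 hw', by simp [hw, hw', hvw, hvw', hdw]⟩
    · omega
    · obtain ⟨w, hw, w', hw', hπw, hπw', hvw, hvw', hδw⟩ :=
        hL.exists_adj_ne ⟨hu, huP⟩ ⟨hv, hvP⟩ hvu (by omega)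
      exact ⟨w, hw.1, w', hw'.1, by simp [hw.2, hw'.2, hπw, hπw', hvw, hvw', hδw]⟩

theorem exists_isBipartiteLayeringOn [Finite V] (G : SimpleGraph V) (R : Set V) :
    ∃ k π δ, G.IsBipartiteLayeringOn R k π δ := by
  induction R using WellFoundedLT.induction with | _ R ih => ?_
  rcases R.eq_empty_or_nonempty with rfl | ⟨v, hv⟩
  · exact ⟨0, 0, 0, ⟨by simp, by simp, by simp, by simp⟩⟩
  · obtain ⟨P, hvP, hP⟩ := Finite.exists_le_maximal
      (p := fun P => P ⊆ R ∧ G.IsBipartiteBlock P)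
      ⟨Set.singleton_subset_iff.mpr hv, isBipartiteBlock_singleton v⟩
    obtain ⟨d, hd⟩ := hP.prop.2.2
    obtain ⟨k, π, δ, hL⟩ :=
      ih (R \ P) (Set.sdiff_ssubset_left_iff.mpr ⟨v, hv, hvP rfl⟩)
    exact ⟨k + 1, _, _, hL.cons hP hd⟩

theorem exists_isBipartiteLayering [Finite V] (G : SimpleGraph V) :
    ∃ (k : ℕ) (π : V → Fin k) (δ : V → Bool), G.IsBipartiteLayering π δ := by
  obtain ⟨k, π, δ, hL⟩ := G.exists_isBipartiteLayeringOn Set.univ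
  refine ⟨k, fun v => ⟨π v, hL.lt trivial⟩, δ, ⟨⟨fun i => ?_, fun u v huv h => ?_⟩, ?_⟩⟩
  · simpa [Set.preimage, Fin.ext_iff] using hL.connected i.2
  · exact hL.side_ne trivial trivial huv (congrArg Fin.val h)
  · intro u v hvu h
    obtain ⟨w, -, w', -, hw, hw', hvw, hvw', hδ⟩ := hL.exists_adj_ne trivial trivial hvu h
    exact ⟨w, w', Fin.ext hw, Fin.ext hw', hvw, hvw', hδ⟩

theorem colorable_two_mul_of_not_hasEvenOddCliqueMinor {t n : ℕ}
    (hn : ∀ (m : ℕ) (G : SimpleGraph (Fin m)), ¬ G.HasCliqueMinor t → G.Colorable n) {m : ℕ}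
    {G : SimpleGraph (Fin m)} (hG : ¬ G.HasEvenOddCliqueMinor t) : G.Colorable (2 * n) := by
  obtain ⟨k, π, δ, hL⟩ := G.exists_isBipartiteLayering
  exact colorable_two_mul_of_map hL.side_ne
    (hn k _ fun h => hG (hL.hasEvenOddCliqueMinor h))

end SimpleGraph

theorem Nat.sInf_le_of_mapsTo {S T : Set ℕ} {f : ℕ → ℕ} (hf : Set.MapsTo f T S)
    (hST : S.Nonempty → T.Nonempty) : sInf S ≤ f (sInf T) := by
  rcases S.eq_empty_or_nonempty with rfl | hS
  · simp
  · exact Nat.sInf_le (hf (Nat.sInf_mem (hST hS)))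

open SimpleGraph

theorem fo_le_feo (t : ℕ) : fo t ≤ feo t :=
  Nat.sInf_le_of_mapsTo (f := id)
    (fun _ hn m G hG => hn m G (mt HasEvenOddCliqueMinor.hasOddCliqueMinor hG))
    fun ⟨n, hn⟩ => ⟨2 * n, fun _ _ hG => colorable_two_mul_of_not_hasEvenOddCliqueMinor
      (fun m G hG => hn m G (mt HasOddCliqueMinor.hasCliqueMinor hG)) hG⟩

theorem feo_le_two_mul_fHadwiger (t : ℕ) : feo t ≤ 2 * fHadwiger t :=
  Nat.sInf_le_of_mapsTo (f := (2 * ·))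
    (fun _ hn _ _ hG => colorable_two_mul_of_not_hasEvenOddCliqueMinor hn hG)
    fun ⟨n, hn⟩ => ⟨n, fun m G hG => hn m G fun h => hG h.hasOddCliqueMinor.hasCliqueMinor⟩

theorem stmt13_general (t : ℕ) :
    fo t ≤ feo t ∧ feo t ≤ 2 * fHadwiger t :=
  ⟨fo_le_feo t, feo_le_two_mul_fHadwiger t⟩

/-- for every `t ≥ 2`, `f_o(t) ≤ f_eo(t) ≤ 2 f(t)`. -/
theorem stmt13 (t : ℕ) (ht : 2 ≤ t) :
    fo t ≤ feo t ∧ feo t ≤ 2 * fHadwiger t :=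
  stmt13_general t
end

section
/- For any graph H, the signed graph H̃ is a topological minor of a signed graph (G, σ) if and only if H̃ is a total topological minor of (G, σ). -/
open SGraph

/-!
Switching `H̃` at a set of vertices only exchanges, for each edge of `H` with exactly one
end in the set, its positive and negative copies. So every switching of `H̃` is isomorphic
to `H̃` by a map fixing the vertices, and a total topological minor of a switching of `H̃`
is one of `H̃` itself.
-/

namespace SGraph

variable {V W : Type}

@[simp]
lemma switch_false (G : SGraph V) : G.switch (fun _ => false) = G := by
  obtain ⟨E, ends, neg⟩ := G
  simp only [switch, mk.injEq, heq_eq_eq, true_and]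
  funext e
  induction ends e using Sym2.ind with
  | _ u v => simp

lemma IsTotalTopMinor.isTopMinor {H : SGraph W} {G : SGraph V} (h : H.IsTotalTopMinor G) :
    H.IsTopMinor G :=
  ⟨fun _ => false, by rwa [switch_false]⟩

lemma IsTotalTopMinor.comap {H H' : SGraph W} {G : SGraph V} (τ : H'.E → H.E)
    (hτ : Function.Injective τ) (hends : ∀ e, H.ends (τ e) = H'.ends e)
    (hneg : ∀ e, H.neg (τ e) = H'.neg e) (h : H.IsTotalTopMinor G) :
    H'.IsTotalTopMinor G := by
  obtain ⟨φ, ep, hφ, hep, P, hnodup, hinner, hrange, hedges, hsign⟩ := h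
  refine ⟨φ, ep ∘ τ, hφ, fun e => (hends e).symm.trans (hep (τ e)), fun e => P (τ e),
    fun e => hnodup (τ e), fun e f hef => hinner _ _ (hτ.ne hef), fun e => hrange (τ e),
    fun e f hef => hedges _ _ (hτ.ne hef), fun e => (hsign (τ e)).trans (hneg e)⟩

end SGraph

namespace SimpleGraph

variable {V W : Type}

lemma tildeS_isTotalTopMinor_of_switch (H : SimpleGraph W) (G : SGraph V) (s : W → Bool)
    (h : (H.tildeS.switch s).IsTotalTopMinor G) : H.tildeS.IsTotalTopMinor G := by
  let flip : H.edgeSet → Bool := fun e =>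
    Sym2.lift ⟨fun u v => (s u).xor (s v), fun u v => Bool.xor_comm _ _⟩ e
  refine h.comap (fun x => (x.1, x.2.xor (flip x.1))) ?_ (fun _ => rfl) ?_
  · rintro ⟨e, b⟩ ⟨e', b'⟩ hee'
    obtain ⟨rfl, hb⟩ := Prod.mk.inj hee'
    obtain rfl : b = b' := by simpa using hb
    rfl
  · rintro ⟨e, b⟩
    change (b.xor (flip e)).xor (flip e) = b
    simp

end SimpleGraph

open SGraph

/-- for any graph `H`, the signed graph `H̃` is a topological minor of
`(G, σ)` iff it is a total topological minor of `(G, σ)`. -/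
theorem stmt14 {V W : Type} (H : SimpleGraph W) (G : SGraph V) :
    H.tildeS.IsTopMinor G ↔ H.tildeS.IsTotalTopMinor G :=
  ⟨fun ⟨s, h⟩ => H.tildeS_isTotalTopMinor_of_switch G s h, IsTotalTopMinor.isTopMinor⟩
end
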